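/- Let H and 𝒦 be separable complex Hilbert spaces, U : ℝ → U(H) a strongly continuous unitary representation, Λ the translation representation (Λ(t)Φ)(s) = Φ(s−t) on L²(ℝ;𝒦), and W : H → L²(ℝ;𝒦) an isometry with W U(t) = Λ(t) W for all t. For f ∈ L^∞(ℝ) set E(f) := W* M_f W. Then for every f₁ ∈ L¹(ℝ) ∩ L^∞(ℝ) and every f₂ ∈ L¹(ℝ), the weak operator integral ∫_ℝ f₂(t) U(t) E(f₁) U(t)* dt equals E(f₁ ∗ f₂); that is, for all ψ, ψ' ∈ H, ∫_ℝ f₂(t) ⟨ψ, U(t) E(f₁) U(t)* ψ'⟩ dt = ⟨ψ, E(f₁ ∗ f₂) ψ'⟩, where (f₁ ∗ f₂)(s) = ∫_ℝ f₁(s−t) f₂(t) dt is the convolution. -/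

import Mathlib

open MeasureTheory
open scoped ENNReal NNReal

local notation "⟪" x ", " y "⟫_ℂ" => @inner ℂ _ _ x y

/-!
Conjugating `E(f₁)` by `U(t)` and using `W U(-t) = Λ(-t) W`, the matrix element
`⟨ψ, U(t) E(f₁) U(t)* ψ'⟩` becomes `∫ f₁(s - t) ⟨Wψ(s), Wψ'(s)⟩ ds` by translation invariance of
Lebesgue measure. Integrating against `f₂(t)` and exchanging the two integrals (Fubini, licensed
by `|f₁| ≤ C`, `f₂ ∈ L¹` and `⟨Wψ, Wψ'⟩ ∈ L¹`) produces the convolution `f₁ ∗ f₂` as multiplier.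
-/

lemma star_eq_apply_neg {G A : Type*} [AddGroup G] [Monoid A] [StarMul A] {U : G → A}
    (hU0 : U 0 = 1) (hUadd : ∀ s t, U (s + t) = U s * U t) (hUuni : ∀ t, U t ∈ unitary A)
    (t : G) : star (U t) = U (-t) :=
  left_inv_eq_right_inv (Unitary.star_mul_self_of_mem (hUuni t))
    (by rw [← hUadd, add_neg_cancel, hU0])

lemma ContinuousLinearMap.inner_mul_mul_star_apply {H : Type*} [NormedAddCommGroup H]
    [InnerProductSpace ℂ H] [CompleteSpace H] (u E : H →L[ℂ] H) (ψ ψ' : H) :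
    ⟪ψ, (u * E * star u) ψ'⟫_ℂ = ⟪star u ψ, E (star u ψ')⟫_ℂ := by
  rw [star_eq_adjoint, adjoint_inner_left]
  rfl

section Translation

variable {G K : Type*} [AddGroup G] [MeasurableSpace G] [MeasurableAdd G]
  {μ : Measure G} [μ.IsAddRightInvariant]
  [NormedAddCommGroup K] [InnerProductSpace ℂ K]

lemma integral_mul_inner_of_ae_eq_sub (f : G → ℂ) {φ φ' χ χ' : G → K} (t : G)
    (hχ : χ =ᵐ[μ] fun s => φ (s - t)) (hχ' : χ' =ᵐ[μ] fun s => φ' (s - t)) :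
    ∫ s, f s * ⟪χ s, χ' s⟫_ℂ ∂μ = ∫ s, f (s + t) * ⟪φ s, φ' s⟫_ℂ ∂μ := by
  rw [← integral_sub_right_eq_self (fun s => f (s + t) * ⟪φ s, φ' s⟫_ℂ) t]
  refine integral_congr_ae ?_
  filter_upwards [hχ, hχ'] with s hs hs'
  rw [hs, hs', sub_add_cancel]

end Translation

section Fubini

variable {G : Type*} [AddGroup G] [MeasurableSpace G] [MeasurableSub₂ G]
  {μ : Measure G} {f₁ f₂ g : G → ℂ} {C : ℝ}

lemma integrable_prod_mul_sub_mul (hf₁ : Measurable f₁) (hC : ∀ s, ‖f₁ s‖ ≤ C)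
    (hf₂ : Integrable f₂ μ) (hg : Integrable g μ) :
    Integrable (fun p : G × G => f₂ p.1 * (f₁ (p.2 - p.1) * g p.2)) (μ.prod μ) := by
  have hmeas : AEStronglyMeasurable (fun p : G × G => f₂ p.1 * (f₁ (p.2 - p.1) * g p.2))
      (μ.prod μ) :=
    hf₂.aestronglyMeasurable.comp_fst.mul
      ((hf₁.comp (measurable_snd.sub measurable_fst)).aestronglyMeasurable.mul
        hg.aestronglyMeasurable.comp_snd)
  refine (hf₂.norm.mul_prod (hg.norm.const_mul C)).mono' hmeas (.of_forall fun p => ?_)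
  rw [norm_mul, norm_mul]
  gcongr
  exact hC _

lemma integral_mul_integral_sub_mul_comm [SFinite μ] (hf₁ : Measurable f₁) (hC : ∀ s, ‖f₁ s‖ ≤ C)
    (hf₂ : Integrable f₂ μ) (hg : Integrable g μ) :
    ∫ t, f₂ t * ∫ s, f₁ (s - t) * g s ∂μ ∂μ = ∫ s, (∫ t, f₁ (s - t) * f₂ t ∂μ) * g s ∂μ := calc
  _ = ∫ t, ∫ s, f₂ t * (f₁ (s - t) * g s) ∂μ ∂μ := by simp_rw [integral_const_mul]
  _ = ∫ s, ∫ t, f₂ t * (f₁ (s - t) * g s) ∂μ ∂μ :=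
    integral_integral_swap (integrable_prod_mul_sub_mul hf₁ hC hf₂ hg)
  _ = ∫ s, (∫ t, f₁ (s - t) * f₂ t ∂μ) * g s ∂μ := by
    congr 1 with s
    rw [← integral_mul_const]
    congr 1 with t
    ring

end Fubini

theorem stmt19_general {H K : Type*}
    [NormedAddCommGroup H] [InnerProductSpace ℂ H] [CompleteSpace H]
    [NormedAddCommGroup K] [InnerProductSpace ℂ K]
    (U : ℝ → (H →L[ℂ] H))
    (hU0 : U 0 = 1) (hUadd : ∀ s t : ℝ, U (s + t) = U s * U t)
    (hUuni : ∀ t : ℝ, U t ∈ unitary (H →L[ℂ] H))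
    (W : H →ₗᵢ[ℂ] Lp K 2 (volume : Measure ℝ))
    (hW : ∀ (t : ℝ) (ψ : H),
        (W (U t ψ) : ℝ → K) =ᵐ[volume] fun s => (W ψ : Lp K 2 (volume : Measure ℝ)) (s - t))
    (f₁ f₂ : ℝ → ℂ)
    (hf₁_meas : Measurable f₁) (hf₁_bdd : ∃ C : ℝ, ∀ s, ‖f₁ s‖ ≤ C)
    (hf₂_int : Integrable f₂)
    (E₁ E₁₂ : H →L[ℂ] H)
    (hE₁ : ∀ ψ ψ' : H, ⟪ψ, E₁ ψ'⟫_ℂ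
        = ∫ s : ℝ, f₁ s * ⟪(W ψ : Lp K 2 (volume : Measure ℝ)) s,
            (W ψ' : Lp K 2 (volume : Measure ℝ)) s⟫_ℂ)
    (hE₁₂ : ∀ ψ ψ' : H, ⟪ψ, E₁₂ ψ'⟫_ℂ
        = ∫ s : ℝ, (∫ t : ℝ, f₁ (s - t) * f₂ t) * ⟪(W ψ : Lp K 2 (volume : Measure ℝ)) s,
            (W ψ' : Lp K 2 (volume : Measure ℝ)) s⟫_ℂ) :
    ∀ ψ ψ' : H,
      ∫ t : ℝ, f₂ t * ⟪ψ, (U t * E₁ * star (U t)) ψ'⟫_ℂ = ⟪ψ, E₁₂ ψ'⟫_ℂ := by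
  intro ψ ψ'
  obtain ⟨C, hC⟩ := hf₁_bdd
  have hconj (t : ℝ) : ⟪ψ, (U t * E₁ * star (U t)) ψ'⟫_ℂ
      = ∫ s, f₁ (s - t) * ⟪(W ψ : Lp K 2 (volume : Measure ℝ)) s,
          (W ψ' : Lp K 2 (volume : Measure ℝ)) s⟫_ℂ := by
    rw [ContinuousLinearMap.inner_mul_mul_star_apply, star_eq_apply_neg hU0 hUadd hUuni, hE₁]
    simpa only [← sub_eq_add_neg] using
      integral_mul_inner_of_ae_eq_sub f₁ (-t) (hW (-t) ψ) (hW (-t) ψ')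
  simp_rw [hconj]
  rw [hE₁₂, integral_mul_integral_sub_mul_comm hf₁_meas hC hf₂_int
    (L2.integrable_inner (W ψ) (W ψ'))]

/-- Let `W : H → L²(ℝ;𝒦)` be an isometry intertwining a strongly continuous
unitary one-parameter group `U` with the translation representation (a.e. formulation), and
for bounded measurable `g` let `E(g) = W* M_g W` be characterised by its matrix elements.
Then for `f₁ ∈ L¹ ∩ L^∞` and `f₂ ∈ L¹` the weak operator integral
`∫ f₂(t) U(t) E(f₁) U(t)* dt` equals `E(f₁ ∗ f₂)`:
`∫ t, f₂ t ⟨ψ, U(t) E(f₁) U(t)* ψ'⟩ = ⟨ψ, E(f₁ ∗ f₂) ψ'⟩` for all `ψ, ψ'`. -/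
theorem stmt19 {H K : Type*}
    [NormedAddCommGroup H] [InnerProductSpace ℂ H] [CompleteSpace H] [SecondCountableTopology H]
    [NormedAddCommGroup K] [InnerProductSpace ℂ K] [CompleteSpace K] [SecondCountableTopology K]
    (U : ℝ → (H →L[ℂ] H))
    (hU0 : U 0 = 1) (hUadd : ∀ s t : ℝ, U (s + t) = U s * U t)
    (hUuni : ∀ t : ℝ, U t ∈ unitary (H →L[ℂ] H))
    (hUcont : ∀ ψ : H, Continuous fun t : ℝ => U t ψ)
    (W : H →ₗᵢ[ℂ] Lp K 2 (volume : Measure ℝ))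
    (hW : ∀ (t : ℝ) (ψ : H),
        (W (U t ψ) : ℝ → K) =ᵐ[volume] fun s => (W ψ : Lp K 2 (volume : Measure ℝ)) (s - t))
    (f₁ f₂ : ℝ → ℂ)
    (hf₁_meas : Measurable f₁) (hf₁_int : Integrable f₁) (hf₁_bdd : ∃ C : ℝ, ∀ s, ‖f₁ s‖ ≤ C)
    (hf₂_int : Integrable f₂)
    (E₁ E₁₂ : H →L[ℂ] H)
    (hE₁ : ∀ ψ ψ' : H, ⟪ψ, E₁ ψ'⟫_ℂ
        = ∫ s : ℝ, f₁ s * ⟪(W ψ : Lp K 2 (volume : Measure ℝ)) s,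
            (W ψ' : Lp K 2 (volume : Measure ℝ)) s⟫_ℂ)
    (hE₁₂ : ∀ ψ ψ' : H, ⟪ψ, E₁₂ ψ'⟫_ℂ
        = ∫ s : ℝ, (∫ t : ℝ, f₁ (s - t) * f₂ t) * ⟪(W ψ : Lp K 2 (volume : Measure ℝ)) s,
            (W ψ' : Lp K 2 (volume : Measure ℝ)) s⟫_ℂ) :
    ∀ ψ ψ' : H,
      ∫ t : ℝ, f₂ t * ⟪ψ, (U t * E₁ * star (U t)) ψ'⟫_ℂ = ⟪ψ, E₁₂ ψ'⟫_ℂ :=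
  stmt19_general U hU0 hUadd hUuni W hW f₁ f₂ hf₁_meas hf₁_bdd hf₂_int E₁ E₁₂ hE₁ hE₁₂
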